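/- arXiv:1603.05205 — 5 statements merged into one kernel-verified Lean document; each statement's English description precedes it below -/
import Mathlib

section
/- Let Rx(T) be the approximate backward reachable set of the x-subsystem (with the coupling variable y treated as a disturbance ranging in Y), and Ry(T) the approximate backward reachable set of the y-subsystem (with the coupling variable x treated as a disturbance ranging in X), both for the target sets L1 and L2 respectively. Let R(T) be the backward reachable set of the coupled system relative to the domain X × Y with target L1 ×ˢ L2. Then Rx(T) ×ˢ Ry(T) ⊆ R(T); that is, if x₀ ∈ Rx(T) and y₀ ∈ Ry(T) then (x₀, y₀) ∈ R(T). (Proposition 1 of the paper, open-loop disturbance formulation used in its proof.) -/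
open Set

/-- `E n` is the Euclidean space `ℝ^n`. -/
abbrev E (n : ℕ) : Type := EuclideanSpace ℝ (Fin n)

/-- **Proposition 1 (open-loop disturbance formulation).**
If `x₀` lies in the approximate backward reachable set `Rx(T)` of the `x`-subsystem
(with the coupling variable `y` treated as a disturbance ranging in `Y`), and `y₀`
lies in the approximate backward reachable set `Ry(T)` of the `y`-subsystem
(with `x` treated as a disturbance ranging in `X`), then `(x₀, y₀)` lies in the
backward reachable set `R(T)` of the coupled system relative to the domain `X ×ˢ Y`
with target `L1 ×ˢ L2`; that is, `Rx(T) ×ˢ Ry(T) ⊆ R(T)`. -/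
theorem prop1_coupling_as_disturbance_openLoop
    (T : ℝ) (hT : 0 < T) (n₁ n₂ m₁ m₂ k₁ k₂ : ℕ)
    (U₁ : Set (E m₁)) (U₂ : Set (E m₂))
    (D₁ : Set (E k₁)) (D₂ : Set (E k₂))
    (X : Set (E n₁)) (Y : Set (E n₂))
    (L1 : Set (E n₁)) (L2 : Set (E n₂))
    (g : E n₁ → E n₂ → E m₁ → E k₁ → E n₁)
    (h : E n₂ → E n₁ → E m₂ → E k₂ → E n₂) :
    -- Rx(T)
    ({x₀ : E n₁ | ∃ u_x : ℝ → E m₁, (∀ t, u_x t ∈ U₁) ∧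
        ∀ d_x : ℝ → E k₁, (∀ t, d_x t ∈ D₁) →
        ∀ y_d : ℝ → E n₂, (∀ t ∈ Icc (-T) 0, y_d t ∈ Y) →
        ∀ x : ℝ → E n₁,
          (∀ t ∈ Icc (-T) 0, HasDerivAt x (g (x t) (y_d t) (u_x t) (d_x t)) t) →
          x (-T) = x₀ → (∀ t ∈ Icc (-T) 0, x t ∈ X) → x 0 ∈ L1} ×ˢ
    -- Ry(T)
    {y₀ : E n₂ | ∃ u_y : ℝ → E m₂, (∀ t, u_y t ∈ U₂) ∧
        ∀ d_y : ℝ → E k₂, (∀ t, d_y t ∈ D₂) →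
        ∀ x_d : ℝ → E n₁, (∀ t ∈ Icc (-T) 0, x_d t ∈ X) →
        ∀ y : ℝ → E n₂,
          (∀ t ∈ Icc (-T) 0, HasDerivAt y (h (y t) (x_d t) (u_y t) (d_y t)) t) →
          y (-T) = y₀ → (∀ t ∈ Icc (-T) 0, y t ∈ Y) → y 0 ∈ L2}) ⊆
    -- R(T)
    {p : E n₁ × E n₂ | ∃ u_x : ℝ → E m₁, ∃ u_y : ℝ → E m₂,
        (∀ t, u_x t ∈ U₁) ∧ (∀ t, u_y t ∈ U₂) ∧
        ∀ d_x : ℝ → E k₁, (∀ t, d_x t ∈ D₁) →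
        ∀ d_y : ℝ → E k₂, (∀ t, d_y t ∈ D₂) →
        ∀ x : ℝ → E n₁, ∀ y : ℝ → E n₂,
          (∀ t ∈ Icc (-T) 0, HasDerivAt x (g (x t) (y t) (u_x t) (d_x t)) t) →
          (∀ t ∈ Icc (-T) 0, HasDerivAt y (h (y t) (x t) (u_y t) (d_y t)) t) →
          x (-T) = p.1 → y (-T) = p.2 →
          (∀ t ∈ Icc (-T) 0, (x t, y t) ∈ X ×ˢ Y) →
          (x 0, y 0) ∈ L1 ×ˢ L2} := by
  rintro ⟨x₀, y₀⟩ ⟨⟨u_x, hu_x, hx₀⟩, ⟨u_y, hu_y, hy₀⟩⟩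
  refine ⟨u_x, u_y, hu_x, hu_y, ?_⟩
  intro d_x hd_x d_y hd_y x y hdx hdy hxT hyT hXY
  have hX : ∀ t ∈ Icc (-T) 0, x t ∈ X := fun t ht => (hXY t ht).1
  have hY : ∀ t ∈ Icc (-T) 0, y t ∈ Y := fun t ht => (hXY t ht).2
  exact ⟨hx₀ d_x hd_x y hY x hdx hxT hX, hy₀ d_y hd_y x hX y hdy hyT hY⟩
end

section
/- Let Rx(T) and Ry(T) be the approximate backward reachable sets of the x- and y-subsystems defined with measurable control signals and quantification over all measurable disturbance and coupling-disturbance signals. Let R^Γ(T) be the coupled backward reachable set relative to the domain X × Y defined with nonanticipative disturbance strategies: (x₀,y₀) ∈ R^Γ(T) iff there exists a measurable control signal (u_x,u_y) valued in U₁ × U₂ such that for every nonanticipative strategy γ, every coupled trajectory on [-T,0] driven by (u_x,u_y) and the disturbance γ(u_x,u_y), starting at (x₀,y₀) and remaining in X × Y, ends in L1 ×ˢ L2. Then Rx(T) ×ˢ Ry(T) ⊆ R^Γ(T). (Proposition 1 of the paper, stated with the nonanticipative-strategy definition (4) of the backward reachable set.) -/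
open Set MeasureTheory

/-- A nonanticipative strategy on `[-T,0]`: a map `γ` sending each measurable control
signal valued in `Uad` to a measurable disturbance signal valued in `Dad`, such that
for all admissible `u, uu` and every `s ∈ [-T,0]`, if `u = uu` Lebesgue-a.e. on `[-T,s]`
then `γ u = γ uu` Lebesgue-a.e. on `[-T,s]`. -/
def NonAnticipative {α β : Type*} [MeasurableSpace α] [MeasurableSpace β]
    (T : ℝ) (Uad : Set α) (Dad : Set β) (γ : (ℝ → α) → (ℝ → β)) : Prop :=
  (∀ u : ℝ → α, Measurable u → (∀ t, u t ∈ Uad) →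
      Measurable (γ u) ∧ ∀ t, γ u t ∈ Dad) ∧
  ∀ u uu : ℝ → α, Measurable u → (∀ t, u t ∈ Uad) →
      Measurable uu → (∀ t, uu t ∈ Uad) →
      ∀ s ∈ Icc (-T) 0,
        (∀ᵐ r ∂(volume.restrict (Icc (-T) s)), u r = uu r) →
        (∀ᵐ r ∂(volume.restrict (Icc (-T) s)), γ u r = γ uu r)

/-- **Proposition 1 (nonanticipative-strategy formulation of the BRS).**
With `Rx(T)` and `Ry(T)` the approximate backward reachable sets of the `x`- and
`y`-subsystems (measurable controls, quantification over all measurable disturbance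
and coupling-disturbance signals), and `R^Γ(T)` the coupled backward reachable set
relative to the domain `X ×ˢ Y` defined with nonanticipative disturbance strategies,
we have `Rx(T) ×ˢ Ry(T) ⊆ R^Γ(T)`. -/
theorem prop1_coupling_as_disturbance_strategy
    (T : ℝ) (hT : 0 < T) (n₁ n₂ m₁ m₂ k₁ k₂ : ℕ)
    (U₁ : Set (E m₁)) (U₂ : Set (E m₂))
    (D₁ : Set (E k₁)) (D₂ : Set (E k₂))
    (X : Set (E n₁)) (Y : Set (E n₂))
    (L1 : Set (E n₁)) (L2 : Set (E n₂))
    (g : E n₁ → E n₂ → E m₁ → E k₁ → E n₁)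
    (h : E n₂ → E n₁ → E m₂ → E k₂ → E n₂) :
    -- Rx(T)
    ({x₀ : E n₁ | ∃ u_x : ℝ → E m₁, Measurable u_x ∧ (∀ t, u_x t ∈ U₁) ∧
        ∀ d_x : ℝ → E k₁, Measurable d_x → (∀ t, d_x t ∈ D₁) →
        ∀ y_d : ℝ → E n₂, Measurable y_d → (∀ t ∈ Icc (-T) 0, y_d t ∈ Y) →
        ∀ x : ℝ → E n₁,
          (∀ t ∈ Icc (-T) 0, HasDerivAt x (g (x t) (y_d t) (u_x t) (d_x t)) t) →
          x (-T) = x₀ → (∀ t ∈ Icc (-T) 0, x t ∈ X) → x 0 ∈ L1} ×ˢ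
    -- Ry(T)
    {y₀ : E n₂ | ∃ u_y : ℝ → E m₂, Measurable u_y ∧ (∀ t, u_y t ∈ U₂) ∧
        ∀ d_y : ℝ → E k₂, Measurable d_y → (∀ t, d_y t ∈ D₂) →
        ∀ x_d : ℝ → E n₁, Measurable x_d → (∀ t ∈ Icc (-T) 0, x_d t ∈ X) →
        ∀ y : ℝ → E n₂,
          (∀ t ∈ Icc (-T) 0, HasDerivAt y (h (y t) (x_d t) (u_y t) (d_y t)) t) →
          y (-T) = y₀ → (∀ t ∈ Icc (-T) 0, y t ∈ Y) → y 0 ∈ L2}) ⊆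
    -- R^Γ(T)
    {p : E n₁ × E n₂ | ∃ u : ℝ → E m₁ × E m₂, Measurable u ∧
        (∀ t, u t ∈ U₁ ×ˢ U₂) ∧
        ∀ γ : (ℝ → E m₁ × E m₂) → (ℝ → E k₁ × E k₂),
          NonAnticipative T (U₁ ×ˢ U₂) (D₁ ×ˢ D₂) γ →
          ∀ x : ℝ → E n₁, ∀ y : ℝ → E n₂,
            (∀ t ∈ Icc (-T) 0,
              HasDerivAt x (g (x t) (y t) (u t).1 (γ u t).1) t) →
            (∀ t ∈ Icc (-T) 0,
              HasDerivAt y (h (y t) (x t) (u t).2 (γ u t).2) t) →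
            x (-T) = p.1 → y (-T) = p.2 →
            (∀ t ∈ Icc (-T) 0, (x t, y t) ∈ X ×ˢ Y) →
            (x 0, y 0) ∈ L1 ×ˢ L2} := by
  
  rintro ⟨x₀, y₀⟩ ⟨⟨u_x, hux_m, hux_v, hx⟩, ⟨u_y, huy_m, huy_v, hy⟩⟩
  refine ⟨fun t => (u_x t, u_y t), hux_m.prodMk huy_m,
    fun t => ⟨hux_v t, huy_v t⟩, ?_⟩
  intro γ hγ x y hdx hdy hx0 hy0 hXY
  set u : ℝ → E m₁ × E m₂ := fun t => (u_x t, u_y t) with hu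
  obtain ⟨hγm, hγv⟩ := hγ.1 u (hux_m.prodMk huy_m) (fun t => ⟨hux_v t, huy_v t⟩)
  -- clamp onto [-T,0]
  set π : ℝ → ℝ := fun t => max (-T) (min t 0) with hπ
  have hπ_cont : Continuous π := continuous_const.max (continuous_id.min continuous_const)
  have hπ_mem : ∀ t, π t ∈ Icc (-T) 0 := fun t =>
    ⟨le_max_left _ _, max_le (by linarith) (min_le_right _ _)⟩
  have hπ_id : ∀ t ∈ Icc (-T) 0, π t = t := by
    intro t ht
    simp only [hπ, min_eq_left ht.2, max_eq_right ht.1]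
  have hy_contAt : ∀ t ∈ Icc (-T) 0, ContinuousAt y t := fun t ht => (hdy t ht).continuousAt
  have hx_contAt : ∀ t ∈ Icc (-T) 0, ContinuousAt x t := fun t ht => (hdx t ht).continuousAt
  have hyc : Continuous (fun t => y (π t)) := by
    rw [continuous_iff_continuousAt]
    intro t
    exact (hy_contAt (π t) (hπ_mem t)).comp hπ_cont.continuousAt
  have hxc : Continuous (fun t => x (π t)) := by
    rw [continuous_iff_continuousAt]
    intro t
    exact (hx_contAt (π t) (hπ_mem t)).comp hπ_cont.continuousAt
  have hxmem : ∀ t ∈ Icc (-T) 0, x t ∈ X := fun t ht => (hXY t ht).1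
  have hymem : ∀ t ∈ Icc (-T) 0, y t ∈ Y := fun t ht => (hXY t ht).2
  constructor
  · -- x 0 ∈ L1
    refine hx (fun t => (γ u t).1) (measurable_fst.comp hγm) (fun t => (hγv t).1)
      (fun t => y (π t)) hyc.measurable
      (fun t ht => by show y (π t) ∈ Y; rw [hπ_id t ht]; exact hymem t ht) x ?_ hx0 hxmem
    intro t ht
    show HasDerivAt x (g (x t) (y (π t)) (u_x t) (γ u t).1) t
    rw [hπ_id t ht]; exact hdx t ht

  · -- y 0 ∈ L2
    refine hy (fun t => (γ u t).2) (measurable_snd.comp hγm) (fun t => (hγv t).2)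
      (fun t => x (π t)) hxc.measurable
      (fun t ht => by show x (π t) ∈ X; rw [hπ_id t ht]; exact hxmem t ht) y ?_ hy0 hymem
    intro t ht
    show HasDerivAt y (h (y t) (x (π t)) (u_y t) (γ u t).2) t
    rw [hπ_id t ht]; exact hdy t ht
end

section
/- N-component generalization of Proposition 1: suppose each subsystem i treats the remaining state variables as a disturbance ranging over the domain ∏ⱼ Xⱼ. If x₀ i ∈ Rᵢ(T) for every i, then x₀ ∈ R(T), where R(T) is the backward reachable set of the coupled system relative to the domain ∏ⱼ Xⱼ and target {z | ∀ i, z i ∈ Lᵢ}. Equivalently, the intersection of the (back-projected) approximate component backward reachable sets is contained in the true backward reachable set. (This is the decomposition the paper invokes to reduce the 10D quadrotor to five 2D computations.) -/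
open Set

/-- **N-component generalization of Proposition 1.**
Each subsystem `i` treats the remaining state variables as a disturbance ranging over
the full domain `∏ⱼ Xⱼ`. If `x₀ i` lies in the approximate component backward
reachable set `Rᵢ(T)` for every `i`, then `x₀` lies in the backward reachable set
`R(T)` of the coupled system relative to the domain `∏ⱼ Xⱼ` with target
`{z | ∀ i, z i ∈ Lᵢ}`. -/
theorem propN_coupling_as_disturbance
    (T : ℝ) (hT : 0 < T) (N : ℕ) (n m k : Fin N → ℕ)
    (U : ∀ i, Set (E (m i))) (D : ∀ i, Set (E (k i)))
    (X : ∀ i, Set (E (n i))) (L : ∀ i, Set (E (n i)))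
    (g : ∀ i, E (n i) → (∀ j, E (n j)) → E (m i) → E (k i) → E (n i))
    (x₀ : ∀ j, E (n j))
    -- x₀ i ∈ Rᵢ(T) for every i
    (hmem : ∀ i, ∃ u : ℝ → E (m i), (∀ t, u t ∈ U i) ∧
        ∀ d : ℝ → E (k i), (∀ t, d t ∈ D i) →
        ∀ z_d : ℝ → ∀ j, E (n j), (∀ t ∈ Icc (-T) 0, ∀ j, z_d t j ∈ X j) →
        ∀ x : ℝ → E (n i),
          (∀ t ∈ Icc (-T) 0, HasDerivAt x (g i (x t) (z_d t) (u t) (d t)) t) →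
          x (-T) = x₀ i → (∀ t ∈ Icc (-T) 0, x t ∈ X i) → x 0 ∈ L i) :
    -- x₀ ∈ R(T)
    ∃ u : ∀ i, ℝ → E (m i), (∀ i, ∀ t, (u i) t ∈ U i) ∧
      ∀ d : ∀ i, ℝ → E (k i), (∀ i, ∀ t, (d i) t ∈ D i) →
      ∀ x : ∀ j, ℝ → E (n j),
        (∀ i, ∀ t ∈ Icc (-T) 0,
          HasDerivAt (x i) (g i (x i t) (fun j => x j t) (u i t) (d i t)) t) →
        (∀ j, x j (-T) = x₀ j) →
        (∀ j, ∀ t ∈ Icc (-T) 0, x j t ∈ X j) →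
        ∀ j, x j 0 ∈ L j := by
  choose u hu hresp using hmem
  refine ⟨u, hu, ?_⟩
  intro d hd x hderiv hinit hdom j
  exact hresp j (d j) (hd j) (fun t j => x j t)
    (fun t ht j => hdom j t ht) (x j) (hderiv j) (hinit j) (hdom j)
end

section
/- Disturbance splitting yields a family of conservative approximations: let X¹,…,X^M ⊆ ℝ^{n₁} be pieces with ⋃ᵢ Xⁱ = X. For each i, let Rxⁱ(T) be the approximate backward reachable set of the x-subsystem with trajectories constrained to Xⁱ (and coupling disturbance y_d ranging in Y), let Ryⁱ(T) be the approximate backward reachable set of the y-subsystem with coupling disturbance x_d ranging in Xⁱ (and trajectories constrained to Y), and let Rⁱ(T) be the backward reachable set of the coupled system relative to the domain Xⁱ × Y with target L1 ×ˢ L2. Then for every i, Rxⁱ(T) ×ˢ Ryⁱ(T) ⊆ Rⁱ(T); consequently ⋃ᵢ (Rxⁱ(T) ×ˢ Ryⁱ(T)) ⊆ ⋃ᵢ Rⁱ(T). -/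
open Set

/-- **Disturbance splitting yields a family of conservative approximations.**
With pieces `X¹, …, X^M` covering `X`, for each `i` the product of the approximate
component backward reachable sets computed on the piece `Xⁱ` is contained in the
coupled backward reachable set relative to the domain `Xⁱ ×ˢ Y`:
`Rxⁱ(T) ×ˢ Ryⁱ(T) ⊆ Rⁱ(T)`; consequently
`⋃ᵢ (Rxⁱ(T) ×ˢ Ryⁱ(T)) ⊆ ⋃ᵢ Rⁱ(T)`. -/
theorem disturbance_splitting_conservative
    (T : ℝ) (hT : 0 < T) (M : ℕ) (hM : 1 ≤ M)
    (n₁ n₂ m₁ m₂ k₁ k₂ : ℕ)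
    (U₁ : Set (E m₁)) (U₂ : Set (E m₂))
    (D₁ : Set (E k₁)) (D₂ : Set (E k₂))
    (X : Set (E n₁)) (Xp : Fin M → Set (E n₁)) (hXp : ⋃ i, Xp i = X)
    (Y : Set (E n₂))
    (L1 : Set (E n₁)) (L2 : Set (E n₂))
    (g : E n₁ → E n₂ → E m₁ → E k₁ → E n₁)
    (h : E n₂ → E n₁ → E m₂ → E k₂ → E n₂)
    -- Rxⁱ(T)
    (Rx : Fin M → Set (E n₁))
    (hRx : ∀ i, Rx i =
      {x₀ : E n₁ | ∃ u_x : ℝ → E m₁, (∀ t, u_x t ∈ U₁) ∧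
        ∀ d_x : ℝ → E k₁, (∀ t, d_x t ∈ D₁) →
        ∀ y_d : ℝ → E n₂, (∀ t ∈ Icc (-T) 0, y_d t ∈ Y) →
        ∀ x : ℝ → E n₁,
          (∀ t ∈ Icc (-T) 0, HasDerivAt x (g (x t) (y_d t) (u_x t) (d_x t)) t) →
          x (-T) = x₀ → (∀ t ∈ Icc (-T) 0, x t ∈ Xp i) → x 0 ∈ L1})
    -- Ryⁱ(T)
    (Ry : Fin M → Set (E n₂))
    (hRy : ∀ i, Ry i =
      {y₀ : E n₂ | ∃ u_y : ℝ → E m₂, (∀ t, u_y t ∈ U₂) ∧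
        ∀ d_y : ℝ → E k₂, (∀ t, d_y t ∈ D₂) →
        ∀ x_d : ℝ → E n₁, (∀ t ∈ Icc (-T) 0, x_d t ∈ Xp i) →
        ∀ y : ℝ → E n₂,
          (∀ t ∈ Icc (-T) 0, HasDerivAt y (h (y t) (x_d t) (u_y t) (d_y t)) t) →
          y (-T) = y₀ → (∀ t ∈ Icc (-T) 0, y t ∈ Y) → y 0 ∈ L2})
    -- Rⁱ(T)
    (R : Fin M → Set (E n₁ × E n₂))
    (hR : ∀ i, R i =
      {p : E n₁ × E n₂ | ∃ u_x : ℝ → E m₁, ∃ u_y : ℝ → E m₂,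
        (∀ t, u_x t ∈ U₁) ∧ (∀ t, u_y t ∈ U₂) ∧
        ∀ d_x : ℝ → E k₁, (∀ t, d_x t ∈ D₁) →
        ∀ d_y : ℝ → E k₂, (∀ t, d_y t ∈ D₂) →
        ∀ x : ℝ → E n₁, ∀ y : ℝ → E n₂,
          (∀ t ∈ Icc (-T) 0, HasDerivAt x (g (x t) (y t) (u_x t) (d_x t)) t) →
          (∀ t ∈ Icc (-T) 0, HasDerivAt y (h (y t) (x t) (u_y t) (d_y t)) t) →
          x (-T) = p.1 → y (-T) = p.2 →
          (∀ t ∈ Icc (-T) 0, (x t, y t) ∈ (Xp i) ×ˢ Y) →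
          (x 0, y 0) ∈ L1 ×ˢ L2}) :
    (∀ i, (Rx i) ×ˢ (Ry i) ⊆ R i) ∧
    (⋃ i, (Rx i) ×ˢ (Ry i)) ⊆ ⋃ i, R i := by
  have main : ∀ i, (Rx i) ×ˢ (Ry i) ⊆ R i := by
    intro i p hp
    obtain ⟨hx, hy⟩ := hp
    rw [hRx i] at hx
    rw [hRy i] at hy
    obtain ⟨u_x, hu_x, hx⟩ := hx
    obtain ⟨u_y, hu_y, hy⟩ := hy
    rw [hR i]
    refine ⟨u_x, u_y, hu_x, hu_y, ?_⟩
    intro d_x hd_x d_y hd_y x y hdx hdy hx0 hy0 hXY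
    have hXmem : ∀ t ∈ Icc (-T) 0, x t ∈ Xp i := fun t ht => (hXY t ht).1
    have hYmem : ∀ t ∈ Icc (-T) 0, y t ∈ Y := fun t ht => (hXY t ht).2
    exact ⟨hx d_x hd_x y hYmem x hdx hx0 hXmem,
           hy d_y hd_y x hXmem y hdy hy0 hYmem⟩
  exact ⟨main, iUnion_mono main⟩
end

section
/- The constructive core of Proposition 1: if a control signal u_x (valued in U₁) witnesses x₀ ∈ Rx(T) — i.e., for every disturbance signal d_x valued in D₁, every signal y_d valued in Y on [-T,0], and every x-subsystem trajectory for (y_d, u_x, d_x) with x(-T) = x₀ staying in X, one has x(0) ∈ L1 — and a control signal u_y (valued in U₂) analogously witnesses y₀ ∈ Ry(T), then the same pair (u_x, u_y) witnesses (x₀, y₀) ∈ R(T): for every pair of disturbance signals d_x, d_y valued in D₁, D₂ and every coupled trajectory (x, y) driven by (u_x, u_y, d_x, d_y) with (x, y)(-T) = (x₀, y₀) remaining in X × Y throughout [-T,0], one has (x(0), y(0)) ∈ L1 ×ˢ L2. -/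
open Set

/-- **The constructive core of Proposition 1.**
If a control signal `u_x` (valued in `U₁`) witnesses `x₀ ∈ Rx(T)` and a control
signal `u_y` (valued in `U₂`) witnesses `y₀ ∈ Ry(T)`, then the same pair
`(u_x, u_y)` witnesses `(x₀, y₀) ∈ R(T)`: every coupled trajectory driven by
`(u_x, u_y, d_x, d_y)` starting at `(x₀, y₀)` and remaining in `X ×ˢ Y` on
`[-T,0]` ends in `L1 ×ˢ L2`. -/
theorem prop1_constructive_core
    (T : ℝ) (hT : 0 < T) (n₁ n₂ m₁ m₂ k₁ k₂ : ℕ)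
    (U₁ : Set (E m₁)) (U₂ : Set (E m₂))
    (D₁ : Set (E k₁)) (D₂ : Set (E k₂))
    (X : Set (E n₁)) (Y : Set (E n₂))
    (L1 : Set (E n₁)) (L2 : Set (E n₂))
    (g : E n₁ → E n₂ → E m₁ → E k₁ → E n₁)
    (h : E n₂ → E n₁ → E m₂ → E k₂ → E n₂)
    (x₀ : E n₁) (y₀ : E n₂)
    (u_x : ℝ → E m₁) (u_y : ℝ → E m₂)
    (hu_x : ∀ t, u_x t ∈ U₁) (hu_y : ∀ t, u_y t ∈ U₂)
    -- u_x witnesses x₀ ∈ Rx(T)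
    (hwx : ∀ d_x : ℝ → E k₁, (∀ t, d_x t ∈ D₁) →
        ∀ y_d : ℝ → E n₂, (∀ t ∈ Icc (-T) 0, y_d t ∈ Y) →
        ∀ x : ℝ → E n₁,
          (∀ t ∈ Icc (-T) 0, HasDerivAt x (g (x t) (y_d t) (u_x t) (d_x t)) t) →
          x (-T) = x₀ → (∀ t ∈ Icc (-T) 0, x t ∈ X) → x 0 ∈ L1)
    -- u_y witnesses y₀ ∈ Ry(T)
    (hwy : ∀ d_y : ℝ → E k₂, (∀ t, d_y t ∈ D₂) →
        ∀ x_d : ℝ → E n₁, (∀ t ∈ Icc (-T) 0, x_d t ∈ X) →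
        ∀ y : ℝ → E n₂,
          (∀ t ∈ Icc (-T) 0, HasDerivAt y (h (y t) (x_d t) (u_y t) (d_y t)) t) →
          y (-T) = y₀ → (∀ t ∈ Icc (-T) 0, y t ∈ Y) → y 0 ∈ L2) :
    -- (u_x, u_y) witnesses (x₀, y₀) ∈ R(T)
    ∀ d_x : ℝ → E k₁, (∀ t, d_x t ∈ D₁) →
    ∀ d_y : ℝ → E k₂, (∀ t, d_y t ∈ D₂) →
    ∀ x : ℝ → E n₁, ∀ y : ℝ → E n₂,
      (∀ t ∈ Icc (-T) 0, HasDerivAt x (g (x t) (y t) (u_x t) (d_x t)) t) →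
      (∀ t ∈ Icc (-T) 0, HasDerivAt y (h (y t) (x t) (u_y t) (d_y t)) t) →
      x (-T) = x₀ → y (-T) = y₀ →
      (∀ t ∈ Icc (-T) 0, (x t, y t) ∈ X ×ˢ Y) →
      (x 0, y 0) ∈ L1 ×ˢ L2 := by
  intro d_x hd_x d_y hd_y x y hx hy hx0 hy0 hXY
  have hxX : ∀ t ∈ Icc (-T) 0, x t ∈ X := fun t ht => (hXY t ht).1
  have hyY : ∀ t ∈ Icc (-T) 0, y t ∈ Y := fun t ht => (hXY t ht).2
  exact ⟨hwx d_x hd_x y hyY x hx hx0 hxX, hwy d_y hd_y x hxX y hy hy0 hyY⟩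
end
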